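/- Let Z = F_n^1 be the n-dimensional complex filiform Zinbiel algebra with basis e_1,...,e_n and products [e_i, e_j] = C(i+j−1, j) e_{i+j} for 2 ≤ i+j ≤ n−1 (zero otherwise). Then span{e_{⌊(n+1)/2⌋}, ..., e_n} is the unique abelian ideal of Z of maximal dimension. -/

import Mathlib

/-- Standard basis vectors of `ℂⁿ` (0-indexed: `e n i` is `e_{i+1}`). -/
noncomputable def e (n : ℕ) (i : Fin n) : Fin n → ℂ := Pi.single i 1

/-- `A` is abelian. -/
def IsAbelian {F : Type*} [Field F] {Z : Type*} [AddCommGroup Z] [Module F Z]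
    (b : Z →ₗ[F] Z →ₗ[F] Z) (A : Submodule F Z) : Prop :=
  ∀ x ∈ A, ∀ y ∈ A, b x y = 0

/-- `A` is a two-sided ideal. -/
def IsIdeal {F : Type*} [Field F] {Z : Type*} [AddCommGroup Z] [Module F Z]
    (b : Z →ₗ[F] Z →ₗ[F] Z) (A : Submodule F Z) : Prop :=
  ∀ z : Z, ∀ x ∈ A, b z x ∈ A ∧ b x z ∈ A

/-- The span `A = span{e_{⌊(n+1)/2⌋}, ..., e_n}` (1-based indices `i` with
`⌊(n+1)/2⌋ ≤ i`, i.e. 0-based indices with `(n+1)/2 ≤ i + 1`). -/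
noncomputable def Amax (n : ℕ) : Submodule ℂ (Fin n → ℂ) :=
  Submodule.span ℂ {w | ∃ i : Fin n, (n + 1) / 2 ≤ (i : ℕ) + 1 ∧ w = e n i}

lemma decomp {n : ℕ} (z : Fin n → ℂ) : z = ∑ k, z k • e n k := by
  funext r
  simp [e, Finset.sum_apply, Pi.single_apply]

lemma e_mem_Amax {n : ℕ} {i : Fin n} (h : (n + 1) / 2 ≤ (i : ℕ) + 1) :
    e n i ∈ Amax n :=
  Submodule.subset_span ⟨i, h, rfl⟩

lemma mem_Amax {n : ℕ} (x : Fin n → ℂ)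
    (h : ∀ i : Fin n, x i ≠ 0 → (n + 1) / 2 ≤ (i : ℕ) + 1) : x ∈ Amax n := by
  rw [decomp x]
  refine Submodule.sum_mem _ fun k _ => ?_
  by_cases hk : x k = 0
  · simp [hk]
  · exact Submodule.smul_mem _ _ (e_mem_Amax (h k hk))

lemma b_apply {n : ℕ} (b : (Fin n → ℂ) →ₗ[ℂ] (Fin n → ℂ) →ₗ[ℂ] (Fin n → ℂ))
    (x y : Fin n → ℂ) :
    b x y = ∑ i, ∑ j, (x i * y j) • b (e n i) (e n j) := by
  conv_lhs => rw [decomp x, decomp y]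
  simp only [map_sum, map_smul, LinearMap.sum_apply, LinearMap.smul_apply,
    Finset.smul_sum, smul_smul]
  rw [Finset.sum_comm]
  simp_rw [mul_comm]

section
variable {n : ℕ} {b : (Fin n → ℂ) →ₗ[ℂ] (Fin n → ℂ) →ₗ[ℂ] (Fin n → ℂ)}
  (htable : ∀ i j : Fin n, b (e n i) (e n j) =
      if h : (i : ℕ) + (j : ℕ) + 3 ≤ n then
        ((Nat.choose ((i : ℕ) + (j : ℕ) + 1) ((j : ℕ) + 1) : ℂ)) •
          e n ⟨(i : ℕ) + (j : ℕ) + 1, Nat.lt_of_lt_of_le (Nat.lt_succ_of_lt (Nat.lt_succ_self _)) h⟩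
      else 0)
include htable

lemma L_comp (hn : 0 < n) (v : Fin n → ℂ) (r : Fin n) :
    b (e n ⟨0, hn⟩) v r =
      if h : 1 ≤ (r : ℕ) ∧ (r : ℕ) + 2 ≤ n then v ⟨(r : ℕ) - 1, by omega⟩ else 0 := by
  conv_lhs => rw [decomp v]
  simp only [map_sum, map_smul, Finset.sum_apply, Pi.smul_apply, smul_eq_mul, htable]
  simp only [dite_apply, Pi.smul_apply, Pi.zero_apply, e, Pi.single_apply, smul_eq_mul]
  split_ifs with h
  · rw [Finset.sum_eq_single (⟨(r : ℕ) - 1, by omega⟩ : Fin n)]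
    · rw [dif_pos (by simp; omega)]
      simp only [Fin.ext_iff]
      rw [if_pos (by simp; omega)]
      simp
    · intro j _ hj
      have hj' : ¬ ((r : ℕ) = 0 + (j : ℕ) + 1) := by
        intro hh
        apply hj
        apply Fin.ext
        simp only [Fin.val_mk]
        omega
      by_cases hc : (0 : ℕ) + (j : ℕ) + 3 ≤ n
      · rw [dif_pos hc, if_neg (by simpa [Fin.ext_iff] using hj'), mul_zero, mul_zero]
      · rw [dif_neg hc, mul_zero]
    · intro h'; exact absurd (Finset.mem_univ _) h'
  · refine Finset.sum_eq_zero fun j _ => ?_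
    by_cases hc : (0 : ℕ) + (j : ℕ) + 3 ≤ n
    · rw [dif_pos hc, if_neg, mul_zero, mul_zero]
      simp only [Fin.ext_iff]
      simp
      omega
    · rw [dif_neg hc, mul_zero]

lemma iter_mem {B : Submodule ℂ (Fin n → ℂ)}
    (hI : ∀ z : Fin n → ℂ, ∀ x ∈ B, b z x ∈ B ∧ b x z ∈ B)
    (hn : 0 < n) {x : Fin n → ℂ} (hx : x ∈ B) (m : ℕ) :
    (fun v => b (e n ⟨0, hn⟩) v)^[m] x ∈ B := by
  induction m with
  | zero => exact hx
  | succ m ih =>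
    rw [Function.iterate_succ_apply']
    exact (hI _ _ ih).1

lemma iter_comp (hn : 0 < n) (x : Fin n → ℂ) (m : ℕ) (r : Fin n)
    (h1 : m ≤ (r : ℕ)) (h2 : (r : ℕ) + 2 ≤ n) :
    (fun v => b (e n ⟨0, hn⟩) v)^[m] x r = x ⟨(r : ℕ) - m, by omega⟩ := by
  induction m generalizing r with
  | zero => simp
  | succ m ih =>
    rw [Function.iterate_succ_apply']
    have := L_comp htable hn ((fun v => b (e n ⟨0, hn⟩) v)^[m] x) r
    rw [this, dif_pos ⟨by omega, h2⟩, ih ⟨(r : ℕ) - 1, by omega⟩ (by simp; omega) (by simp; omega)]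
    congr 1
    simp only [Fin.ext_iff, Fin.val_mk]
    omega

lemma iter_zero (hn : 0 < n) (x : Fin n → ℂ) (m : ℕ) (r : Fin n)
    (h1 : (r : ℕ) < m) :
    (fun v => b (e n ⟨0, hn⟩) v)^[m] x r = 0 := by
  induction m generalizing r with
  | zero => omega
  | succ m ih =>
    rw [Function.iterate_succ_apply']
    have := L_comp htable hn ((fun v => b (e n ⟨0, hn⟩) v)^[m] x) r
    rw [this]
    split_ifs with h
    · exact ih ⟨(r : ℕ) - 1, by omega⟩ (by simp; omega)
    · rfl

lemma table_coeff (hn3 : 3 ≤ n) (i j : Fin n) :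
    b (e n i) (e n j) ⟨n - 2, by omega⟩ =
      if (i : ℕ) + (j : ℕ) = n - 3 then ((n - 2).choose ((j : ℕ) + 1) : ℂ) else 0 := by
  rw [htable]
  by_cases hc : (i : ℕ) + (j : ℕ) + 3 ≤ n
  · rw [dif_pos hc]
    simp only [Pi.smul_apply, e, Pi.single_apply, smul_eq_mul, Fin.ext_iff, Fin.val_mk]
    by_cases hd : (i : ℕ) + (j : ℕ) = n - 3
    · rw [if_pos hd, if_pos (by omega), mul_one]
      congr 2
      omega
    · rw [if_neg (by omega), if_neg hd, mul_zero]
  · rw [dif_neg hc, if_neg (by omega)]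
    rfl

set_option maxHeartbeats 1600000 in
lemma support_high {B : Submodule ℂ (Fin n → ℂ)}
    (hI : ∀ z : Fin n → ℂ, ∀ x ∈ B, b z x ∈ B ∧ b x z ∈ B)
    (hA : ∀ x ∈ B, ∀ y ∈ B, b x y = 0)
    {x : Fin n → ℂ} (hx : x ∈ B) :
    ∀ i : Fin n, x i ≠ 0 → (n + 1) / 2 ≤ (i : ℕ) + 1 := by
  by_contra hcon
  push_neg at hcon
  obtain ⟨i, hxi, hi⟩ := hcon
  have hsne : (Finset.univ.filter (fun j : Fin n => x j ≠ 0)).Nonempty :=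
    ⟨i, by simp [hxi]⟩
  set p : Fin n := (Finset.univ.filter (fun j : Fin n => x j ≠ 0)).min' hsne with hp
  have hpmem := Finset.min'_mem _ hsne
  rw [← hp] at hpmem
  have hxp : x p ≠ 0 := by simpa using hpmem
  have hmin : ∀ j : Fin n, (j : ℕ) < (p : ℕ) → x j = 0 := by
    intro j hj
    by_contra hxj
    have : p ≤ j := Finset.min'_le _ j (by simp [hxj])
    rw [Fin.le_def] at this
    omega
  have hpi : (p : ℕ) ≤ (i : ℕ) := by
    have : p ≤ i := Finset.min'_le _ i (by simp [hxi])
    rwa [Fin.le_def] at this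
  have hn3 : 2 * (p : ℕ) + 3 ≤ n := by omega
  have hn : 0 < n := by omega
  set P := (p : ℕ) with hP
  set Q := n - 3 - P with hQ
  set k := Q - P with hk
  set y := (fun v => b (e n ⟨0, hn⟩) v)^[k] x with hy
  have hyB : y ∈ B := iter_mem htable hI hn hx k
  have hab : b x y = 0 := hA x hx y hyB
  set qF : Fin n := ⟨Q, by omega⟩ with hqF
  have hyq : y qF = x p := by
    rw [hy, iter_comp htable hn x k qF (by simp [hqF]; omega) (by simp [hqF]; omega)]
    congr 1
    simp only [Fin.ext_iff, Fin.val_mk, hqF]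
    omega
  have hyj : ∀ j : Fin n, (j : ℕ) < Q → y j = 0 := by
    intro j hj
    rcases lt_or_ge (j : ℕ) k with h1 | h2
    · exact iter_zero htable hn x k j h1
    · rw [hy, iter_comp htable hn x k j h2 (by omega)]
      exact hmin _ (by simp; omega)
  have heval : b x y ⟨n - 2, by omega⟩ = 0 := by rw [hab]; rfl
  rw [b_apply b x y, Finset.sum_apply] at heval
  simp only [Finset.sum_apply, Pi.smul_apply, smul_eq_mul] at heval
  rw [Finset.sum_eq_single p] at heval
  · rw [Finset.sum_eq_single qF] at heval
    · rw [table_coeff htable (by omega), if_pos (by simp [hqF]; omega), hyq] at heval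
      have hch : (((n - 2).choose (Q + 1) : ℕ) : ℂ) ≠ 0 := by
        rw [Nat.cast_ne_zero]
        exact (Nat.choose_pos (by omega)).ne'
      simp only [hqF, Fin.val_mk] at heval
      exact mul_ne_zero (mul_ne_zero hxp hxp) hch heval
    · intro j _ hj
      rw [table_coeff htable (by omega)]
      by_cases hd : (P : ℕ) + (j : ℕ) = n - 3
      · exfalso; exact hj (Fin.ext (by simp [hqF]; omega))
      · rw [if_neg hd, mul_zero]
    · intro h'; exact absurd (Finset.mem_univ _) h'
  · intro i' _ hi'
    refine Finset.sum_eq_zero fun j _ => ?_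
    rw [table_coeff htable (by omega)]
    by_cases hd : (i' : ℕ) + (j : ℕ) = n - 3
    · rcases lt_or_ge (i' : ℕ) P with hlt | hge
      · rw [hmin i' hlt, zero_mul, zero_mul]
      · have : (j : ℕ) < Q := by
          have : P < (i' : ℕ) := lt_of_le_of_ne hge (by
            intro hh; exact hi' (Fin.ext hh.symm))
          omega
        rw [hyj j this, mul_zero, zero_mul]
    · rw [if_neg hd, mul_zero]
  · intro h'; exact absurd (Finset.mem_univ _) h'

lemma table_mem (i j : Fin n) (h : (n + 1) / 2 ≤ (i : ℕ) + 1 ∨ (n + 1) / 2 ≤ (j : ℕ) + 1) :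
    b (e n i) (e n j) ∈ Amax n := by
  rw [htable]
  split_ifs with hc
  · exact Submodule.smul_mem _ _ (e_mem_Amax (by simp; omega))
  · exact Submodule.zero_mem _

lemma bprod_mem (z : Fin n → ℂ) {i : Fin n} (hi : (n + 1) / 2 ≤ (i : ℕ) + 1) :
    b z (e n i) ∈ Amax n ∧ b (e n i) z ∈ Amax n := by
  constructor
  · have h1 : b z (e n i) = ∑ k, z k • b (e n k) (e n i) := by
      conv_lhs => rw [decomp z]
      simp only [map_sum, LinearMap.sum_apply, map_smul, LinearMap.smul_apply]
    rw [h1]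
    exact Submodule.sum_mem _ fun k _ =>
      Submodule.smul_mem _ _ (table_mem htable k i (Or.inr hi))
  · have h1 : b (e n i) z = ∑ k, z k • b (e n i) (e n k) := by
      conv_lhs => rw [decomp z]
      simp only [map_sum, map_smul]
    rw [h1]
    exact Submodule.sum_mem _ fun k _ =>
      Submodule.smul_mem _ _ (table_mem htable i k (Or.inl hi))

end


/-- for the `n`-dimensional complex filiform Zinbiel algebra `F_n^1` with
`[e_i, e_j] = C(i+j-1, j) e_{i+j}` for `2 ≤ i+j ≤ n-1` (zero otherwise),
`span{e_{⌊(n+1)/2⌋}, ..., e_n}` is the unique abelian ideal of maximal dimension. -/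
theorem stmt14 (n : ℕ)
    (b : (Fin n → ℂ) →ₗ[ℂ] (Fin n → ℂ) →ₗ[ℂ] (Fin n → ℂ))
    (htable : ∀ i j : Fin n, b (e n i) (e n j) =
      if h : (i : ℕ) + (j : ℕ) + 3 ≤ n then
        ((Nat.choose ((i : ℕ) + (j : ℕ) + 1) ((j : ℕ) + 1) : ℂ)) •
          e n ⟨(i : ℕ) + (j : ℕ) + 1, by omega⟩
      else 0) :
    IsIdeal b (Amax n) ∧ IsAbelian b (Amax n) ∧
    (∀ B : Submodule ℂ (Fin n → ℂ), IsIdeal b B → IsAbelian b B →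
      Module.finrank ℂ B ≤ Module.finrank ℂ (Amax n)) ∧
    (∀ B : Submodule ℂ (Fin n → ℂ), IsIdeal b B → IsAbelian b B →
      Module.finrank ℂ B = Module.finrank ℂ (Amax n) → B = Amax n) := by
  have hBle : ∀ B : Submodule ℂ (Fin n → ℂ), IsIdeal b B → IsAbelian b B → B ≤ Amax n := by
    intro B hI hA x hx
    exact mem_Amax x (support_high htable hI hA hx)
  refine ⟨?_, ?_, ?_, ?_⟩
  · -- ideal
    intro z x hx
    refine Submodule.span_induction ?_ ?_ ?_ ?_ hx
    · rintro w ⟨i, hi, rfl⟩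
      exact bprod_mem htable z hi
    · simp
    · rintro u v _ _ ⟨h1, h2⟩ ⟨h3, h4⟩
      exact ⟨by rw [map_add]; exact Submodule.add_mem _ h1 h3,
        by rw [map_add, LinearMap.add_apply]; exact Submodule.add_mem _ h2 h4⟩
    · rintro c u _ ⟨h1, h2⟩
      exact ⟨by rw [map_smul]; exact Submodule.smul_mem _ _ h1,
        by rw [map_smul, LinearMap.smul_apply]; exact Submodule.smul_mem _ _ h2⟩
  · -- abelian
    intro x hx y hy
    have h1 : ∀ j : Fin n, (n + 1) / 2 ≤ (j : ℕ) + 1 → b x (e n j) = 0 := by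
      intro j hj
      have hle : Amax n ≤ LinearMap.ker (b.flip (e n j)) := by
        rw [Amax, Submodule.span_le]
        rintro w ⟨i, hi, rfl⟩
        simp only [SetLike.mem_coe, LinearMap.mem_ker, LinearMap.flip_apply]
        rw [htable, dif_neg (by omega)]
      simpa using hle hx
    have hle : Amax n ≤ LinearMap.ker (b x) := by
      rw [Amax, Submodule.span_le]
      rintro w ⟨i, hi, rfl⟩
      simpa using h1 i hi
    simpa using hle hy
  · intro B hI hA
    exact Submodule.finrank_mono (hBle B hI hA)
  · intro B hI hA heq
    exact Submodule.eq_of_le_of_finrank_eq (hBle B hI hA) heq
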